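/- arXiv:2310.04785 — 3 statements merged into one kernel-verified Lean document; each statement's English description precedes it below -/
import Mathlib

section
/- Let p(x,y) = q(x) + r(x)y + s(x)y² where q, r, s are real polynomials in one variable, and suppose p(m,n) ≠ 0 for all nonnegative integers m, n. If the net (1/p(m,n))_{m,n∈ℤ₊} is jointly completely monotone, then 4 q(m) s(m) ≤ r(m)² for every nonnegative integer m. -/
noncomputable section

/-- Forward difference operator on sequences. -/
def fdiff (a : ℕ → ℝ) : ℕ → ℝ := fun n => a (n + 1) - a n

/-- A sequence is completely monotone if all its iterated forward
differences alternate in sign. -/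
def CompletelyMonotone (a : ℕ → ℝ) : Prop :=
  ∀ k n : ℕ, 0 ≤ (-1 : ℝ) ^ k * (fdiff^[k] a) n

/-- Forward difference in the first index of a double net. -/
def fdiff1 (a : ℕ → ℕ → ℝ) : ℕ → ℕ → ℝ := fun m n => a (m + 1) n - a m n

/-- Forward difference in the second index of a double net. -/
def fdiff2 (a : ℕ → ℕ → ℝ) : ℕ → ℕ → ℝ := fun m n => a m (n + 1) - a m n

/-- A double net is jointly completely monotone if all mixed iterated
forward differences alternate in sign. -/
def JointlyCompletelyMonotone (a : ℕ → ℕ → ℝ) : Prop :=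
  ∀ i j m n : ℕ, 0 ≤ (-1 : ℝ) ^ (i + j) * (fdiff1^[i] (fdiff2^[j] a)) m n

open Finset Real Complex Nat

namespace Stmt2Aux

lemma fdiff2_iter (j : ℕ) (a : ℕ → ℕ → ℝ) (m : ℕ) :
    (fdiff2^[j] a) m = fdiff^[j] (a m) := by
  induction j generalizing a with
  | zero => rfl
  | succ j ih =>
    rw [Function.iterate_succ_apply, Function.iterate_succ_apply, ih]
    congr 1

lemma fdiff_eq : fdiff = fwdDiff (1 : ℕ) := rfl

lemma alt_fdiff_eq_sum (a : ℕ → ℝ) (k n : ℕ) :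
    (-1 : ℝ) ^ k * (fdiff^[k] a) n
      = ∑ j ∈ range (k+1), (-1 : ℝ) ^ j * (k.choose j) * a (n + j) := by
  rw [fdiff_eq, fwdDiff_iter_eq_sum_shift, Finset.mul_sum]
  apply Finset.sum_congr rfl
  intro j hj
  rw [Finset.mem_range] at hj
  have hjk : j ≤ k := by omega
  have hsgn : (-1 : ℝ) ^ k * (-1 : ℝ) ^ (k - j) = (-1 : ℝ) ^ j := by
    have h1 : (-1 : ℝ) ^ (k - j) * (-1 : ℝ) ^ j = (-1 : ℝ) ^ k := by
      rw [← pow_add, Nat.sub_add_cancel hjk]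
    have h2 : ((-1 : ℝ) ^ (k - j)) * ((-1 : ℝ) ^ (k - j)) = 1 := by
      rw [← pow_add, ← two_mul, pow_mul]; norm_num
    calc (-1 : ℝ) ^ k * (-1:ℝ) ^ (k-j) = ((-1:ℝ)^(k-j) * (-1:ℝ)^j) * (-1:ℝ)^(k-j) := by rw [h1]
      _ = (-1:ℝ)^j := by rw [mul_comm ((-1:ℝ)^(k-j)) ((-1:ℝ)^j), mul_assoc, h2, mul_one]
  rw [zsmul_eq_mul, smul_eq_mul, mul_one]
  push_cast
  rw [← mul_assoc, ← mul_assoc, hsgn]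

lemma sum_choose_inv (k : ℕ) : ∀ z : ℂ, z.im ≠ 0 →
    ∑ j ∈ range (k+1), (-1:ℂ)^j * (k.choose j) * (z + j)⁻¹
      = (k ! : ℂ) * (∏ j ∈ range (k+1), (z + j))⁻¹ := by
  induction k with
  | zero => intro z hz; simp
  | succ k ih =>
    intro z hz
    have hfac : ∀ (w : ℂ) (j : ℕ), w.im ≠ 0 → w + (j:ℂ) ≠ 0 := by
      intro w j hw h0
      apply hw
      have := congrArg Complex.im h0
      simpa using this
    have hz1 : (z+1).im ≠ 0 := by simpa using hz
    have hA : ∑ j ∈ range (k+2), (-1:ℂ)^j * ((k+1).choose j) * (z + j)⁻¹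
        = (∑ j ∈ range (k+1), (-1:ℂ)^j * (k.choose j) * (z + j)⁻¹)
          - (∑ j ∈ range (k+1), (-1:ℂ)^j * (k.choose j) * ((z+1) + j)⁻¹) := by
      rw [Finset.sum_range_succ' (fun j => (-1:ℂ)^j * ((k+1).choose j) * (z + j)⁻¹) (k+1)]
      have e1 : ∀ j ∈ range (k+1),
          (-1:ℂ)^(j+1) * ((k+1).choose (j+1)) * (z + (j+1:ℕ))⁻¹
          = (-1:ℂ)^(j+1) * (k.choose j) * (z + (j+1:ℕ))⁻¹
            + (-1:ℂ)^(j+1) * (k.choose (j+1)) * (z + (j+1:ℕ))⁻¹ := by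
        intro j _
        rw [Nat.choose_succ_succ]
        push_cast
        ring
      rw [Finset.sum_congr rfl e1, Finset.sum_add_distrib]
      have e2 : ∑ j ∈ range (k+1), (-1:ℂ)^(j+1) * (k.choose j) * (z + (j+1:ℕ))⁻¹
          = - ∑ j ∈ range (k+1), (-1:ℂ)^j * (k.choose j) * ((z+1) + j)⁻¹ := by
        rw [← Finset.sum_neg_distrib]
        apply Finset.sum_congr rfl
        intro j _
        have : (z + ((j+1:ℕ):ℂ)) = (z+1) + (j:ℂ) := by push_cast; ring
        rw [this]; ring
      have e3 : (∑ j ∈ range (k+1), (-1:ℂ)^(j+1) * (k.choose (j+1)) * (z + (j+1:ℕ))⁻¹)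
            + (-1:ℂ)^0 * (((k+1).choose 0 : ℕ):ℂ) * (z + ((0:ℕ):ℂ))⁻¹
          = ∑ j ∈ range (k+1), (-1:ℂ)^j * (k.choose j) * (z + j)⁻¹ := by
        rw [Finset.sum_range_succ,
          Finset.sum_range_succ' (fun j => (-1:ℂ)^j * ((k.choose j:ℕ):ℂ) * (z + (j:ℂ))⁻¹) k]
        simp [Nat.choose_succ_self]
      rw [e2]
      linear_combination e3
    rw [hA, ih z hz, ih (z+1) hz1]
    have hB : ∏ j ∈ range (k+1), ((z+1) + (j:ℂ)) = ∏ j ∈ range (k+1), (z + ((j+1:ℕ):ℂ)) := by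
      apply Finset.prod_congr rfl; intro j _; push_cast; ring
    rw [hB]
    set A := ∏ j ∈ range (k+1), (z + (j:ℂ)) with hAdef
    set B := ∏ j ∈ range (k+1), (z + ((j+1:ℕ):ℂ)) with hBdef
    have hD1 : ∏ j ∈ range (k+2), (z + (j:ℂ)) = A * (z + ((k+1:ℕ):ℂ)) :=
      Finset.prod_range_succ _ _
    have hD2 : ∏ j ∈ range (k+2), (z + (j:ℂ)) = B * z := by
      rw [Finset.prod_range_succ' (fun j => z + (j:ℂ)) (k+1)]
      simp only [Nat.cast_zero, add_zero]
      rfl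
    have hAne : A ≠ 0 := Finset.prod_ne_zero_iff.2 (fun j _ => hfac z j hz)
    have hBne : B ≠ 0 := Finset.prod_ne_zero_iff.2 (fun j _ => hfac z (j+1) hz)
    have hzne : z ≠ 0 := by simpa using hfac z 0 hz
    have hcne : z + ((k+1:ℕ):ℂ) ≠ 0 := hfac z (k+1) hz
    rw [hD1]
    have hAB : A * (z + ((k+1:ℕ):ℂ)) = B * z := hD1 ▸ hD2
    have hfacs : (((k+1) !  : ℕ):ℂ) = ((k+1:ℕ):ℂ) * ((k ! : ℕ):ℂ) := by
      rw [Nat.factorial_succ]; push_cast; ring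
    rw [hfacs]
    push_cast at hAB hcne ⊢
    field_simp
    linear_combination (-((k ! : ℕ):ℂ)) * hAB

lemma arctan_half {x : ℝ} (h0 : 0 ≤ x) (h1 : x ≤ 1) : x / 2 ≤ Real.arctan x := by
  have hmono : MonotoneOn (fun y : ℝ => Real.arctan y - y / 2) (Set.Icc 0 1) := by
    apply monotoneOn_of_deriv_nonneg (convex_Icc 0 1)
    · apply Continuous.continuousOn
      continuity
    · intro y hy
      exact ((Real.hasDerivAt_arctan y).sub
        ((hasDerivAt_id y).div_const 2)).differentiableAt.differentiableWithinAt
    · intro y hy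
      rw [interior_Icc] at hy
      have hd : deriv (fun y : ℝ => Real.arctan y - y / 2) y = 1 / (1 + y ^ 2) - 1 / 2 := by
        have := (Real.hasDerivAt_arctan y).sub ((hasDerivAt_id y).div_const 2)
        exact this.deriv
      rw [hd]
      have h2 : 1 + y ^ 2 ≤ 2 := by nlinarith [hy.1, hy.2]
      have h3 : (0:ℝ) < 1 + y ^ 2 := by positivity
      have : (1:ℝ)/2 ≤ 1 / (1 + y^2) := by
        apply div_le_div_of_nonneg_left <;> linarith
      linarith
  have := hmono (Set.mem_Icc.2 ⟨le_refl 0, zero_le_one⟩) (Set.mem_Icc.2 ⟨h0, h1⟩) h0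
  simpa [Real.arctan_zero] using this

lemma polar_factor (a τ : ℝ) (ha : 0 < a) :
    (a : ℂ) - (τ:ℂ) * Complex.I
      = (Real.sqrt (a^2 + τ^2) : ℂ) * Complex.exp ((-(Real.arctan (τ/a)) : ℝ) * Complex.I) := by
  have hs : Real.sqrt (1 + (τ/a)^2) = Real.sqrt (a^2 + τ^2) / a := by
    rw [eq_div_iff ha.ne']
    rw [← Real.sqrt_sq ha.le, ← Real.sqrt_mul (by positivity)]
    congr 1
    field_simp
    rw [Real.sq_sqrt (sq_nonneg a)]
  have hsq : (0:ℝ) < Real.sqrt (a^2+τ^2) := by positivity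
  rw [Complex.exp_mul_I, ← Complex.ofReal_cos, ← Complex.ofReal_sin]
  rw [Real.cos_neg, Real.sin_neg, Real.cos_arctan, Real.sin_arctan, hs]
  apply Complex.ext
  · simp only [Complex.sub_re, Complex.ofReal_re, Complex.mul_re, Complex.mul_im,
      Complex.I_re, Complex.I_im, Complex.add_re, Complex.ofReal_im, Complex.neg_re,
      Complex.add_im, Complex.neg_im]
    field_simp
    ring
  · simp only [Complex.sub_im, Complex.ofReal_re, Complex.mul_re, Complex.mul_im,
      Complex.I_re, Complex.I_im, Complex.add_re, Complex.ofReal_im, Complex.neg_re,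
      Complex.add_im, Complex.neg_im]
    field_simp
    ring

lemma winding (σ τ : ℝ) (hτ : 0 < τ)
    (hIm : ∀ k : ℕ, (∏ j ∈ range (k+1), ((j:ℂ) - ((σ:ℂ) + (τ:ℂ) * Complex.I))).im ≤ 0) :
    False := by
  set α : ℂ := (σ:ℂ) + (τ:ℂ) * Complex.I with hα
  have hαim : ∀ j : ℕ, ((j:ℂ) - α).im = -τ := by
    intro j; simp [hα]
  have hfacne : ∀ j : ℕ, (j:ℂ) - α ≠ 0 := by
    intro j h0
    have := congrArg Complex.im h0
    rw [hαim j] at this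
    simp at this
    linarith
  obtain ⟨k0, hk0⟩ := exists_nat_gt (σ + τ)
  set w : ℕ → ℂ := fun k => ∏ j ∈ range (k0 + k + 1), ((j:ℂ) - α) with hw
  have hwsucc : ∀ k, w (k+1) = w k * (((k0 + k + 1 : ℕ):ℂ) - α) := by
    intro k
    have : k0 + (k+1) + 1 = (k0 + k + 1) + 1 := by omega
    rw [hw]
    simp only [this, Finset.prod_range_succ]
  set a : ℕ → ℝ := fun k => ((k0 + k + 1 : ℕ):ℝ) - σ with haa
  have hapos : ∀ k, τ < a k := by
    intro k
    have : (k0:ℝ) ≤ ((k0 + k + 1 : ℕ):ℝ) := by push_cast; linarith [Nat.cast_nonneg (α := ℝ) k]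
    simp only [haa]
    linarith
  have hapos' : ∀ k, 0 < a k := fun k => hτ.trans (hapos k)
  set θ : ℕ → ℝ := fun k => Real.arctan (τ / a k) with hθ
  have hθpos : ∀ k, 0 < θ k := by
    intro k
    have := Real.arctan_strictMono (div_pos hτ (hapos' k))
    simpa [Real.arctan_zero, hθ] using this
  have hθlt : ∀ k, θ k < π/2 := fun k => Real.arctan_lt_pi_div_two _
  have hfactor : ∀ k, (((k0 + k + 1 : ℕ):ℂ) - α)
      = (Real.sqrt ((a k)^2 + τ^2) : ℂ) * Complex.exp ((-(θ k) : ℝ) * Complex.I) := by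
    intro k
    have h1 : (((k0 + k + 1 : ℕ):ℂ) - α) = ((a k : ℝ):ℂ) - (τ:ℂ) * Complex.I := by
      simp only [haa, hα]
      push_cast
      ring
    rw [h1, polar_factor (a k) τ (hapos' k)]
  set ph : ℕ → ℝ := fun k => Complex.arg (w 0) - ∑ i ∈ range k, θ i with hph
  have hphsucc : ∀ k, ph (k+1) = ph k - θ k := by
    intro k
    simp only [hph, Finset.sum_range_succ]
    ring
  set ρ : ℕ → ℝ := fun k => ‖w 0‖ * ∏ i ∈ range k, Real.sqrt ((a i)^2 + τ^2) with hρ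
  have hw0ne : w 0 ≠ 0 := Finset.prod_ne_zero_iff.2 (fun j _ => hfacne j)
  have hρpos : ∀ k, 0 < ρ k := by
    intro k
    apply mul_pos (norm_pos_iff.mpr hw0ne)
    apply Finset.prod_pos
    intro i _
    have := hapos' i
    positivity
  have key : ∀ k, w k = (ρ k : ℂ) * Complex.exp ((ph k : ℝ) * Complex.I) := by
    intro k
    induction k with
    | zero =>
      simp only [hρ, hph, Finset.range_zero, Finset.prod_empty, Finset.sum_empty, mul_one, sub_zero]
      push_cast
      rw [Complex.norm_mul_exp_arg_mul_I]
    | succ k ih =>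
      rw [hwsucc k, ih, hfactor k, hphsucc k]
      simp only [hρ, Finset.prod_range_succ]
      push_cast
      have hexp : Complex.exp (((ph k : ℝ):ℂ) * Complex.I) * Complex.exp (-((θ k : ℝ):ℂ) * Complex.I)
          = Complex.exp ((((ph k : ℝ):ℂ) - ((θ k : ℝ):ℂ)) * Complex.I) := by
        rw [← Complex.exp_add]; ring_nf
      rw [← hexp]
      ring
  have hsin : ∀ k, Real.sin (ph k) ≤ 0 := by
    intro k
    have h1 : (w k).im = ρ k * Real.sin (ph k) := by
      rw [key k]
      simp [Complex.exp_ofReal_mul_I_im]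
    have h2 := hIm (k0 + k)
    have h3 : (w k).im ≤ 0 := by simp only [hw]; exact h2
    rw [h1] at h3
    nlinarith [hρpos k]
  set c : ℝ := τ / (2*((k0:ℝ)+1)*(1+|σ|)) with hc
  have hcpos : 0 < c := by
    rw [hc]
    have h1 : (0:ℝ) < 1 + |σ| := by positivity
    positivity
  have hθlb : ∀ i : ℕ, c / ((i:ℝ)+1) ≤ θ i := by
    intro i
    have ha1 : a i ≤ ((k0:ℝ)+1)*((i:ℝ)+1)*(1+|σ|) := by
      simp only [haa]
      push_cast
      have f1 : (0:ℝ) ≤ (k0:ℝ)*(i:ℝ) :=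
        mul_nonneg (Nat.cast_nonneg k0) (Nat.cast_nonneg i)
      have f2 : (0:ℝ) ≤ ((k0:ℝ)*(i:ℝ)+(k0:ℝ)+(i:ℝ)) * |σ| := by
        apply mul_nonneg _ (abs_nonneg σ)
        have := Nat.cast_nonneg (α := ℝ) k0
        have := Nat.cast_nonneg (α := ℝ) i
        linarith
      nlinarith [f1, f2, neg_le_abs σ]
    have hx0 : 0 ≤ τ / a i := le_of_lt (div_pos hτ (hapos' i))
    have hx1 : τ / a i ≤ 1 := by
      rw [div_le_one (hapos' i)]
      exact (hapos i).le
    have h2 : (τ / a i) / 2 ≤ θ i := arctan_half hx0 hx1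
    have h3 : c / ((i:ℝ)+1) ≤ (τ / a i) / 2 := by
      have e1 : c / ((i:ℝ)+1) = τ / (2*((k0:ℝ)+1)*(1+|σ|)*((i:ℝ)+1)) := by
        rw [hc, div_div]
      have e2 : (τ / a i) / 2 = τ / (2 * a i) := by
        rw [div_div]; ring_nf
      rw [e1, e2]
      apply div_le_div_of_nonneg_left hτ.le (by linarith [hapos' i])
      nlinarith [ha1, Nat.cast_nonneg (α := ℝ) i]
    linarith
  have hdiv : ∀ B : ℝ, ∃ k, ph k < B := by
    intro B
    obtain ⟨k, hk⟩ := ((Real.tendsto_sum_range_one_div_nat_succ_atTop).eventually_gt_atTop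
      (((w 0).arg - B)/c)).exists
    refine ⟨k, ?_⟩
    have hsum1 : ∑ i ∈ range k, c / ((i:ℝ)+1) ≤ ∑ i ∈ range k, θ i :=
      Finset.sum_le_sum (fun i _ => hθlb i)
    have hsum2 : ∑ i ∈ range k, c / ((i:ℝ)+1) = c * ∑ i ∈ range k, (1:ℝ)/((i:ℝ)+1) := by
      rw [Finset.mul_sum]
      apply Finset.sum_congr rfl
      intro i _
      ring
    have hBc : (w 0).arg - B < c * ∑ i ∈ range k, (1:ℝ)/((i:ℝ)+1) := by
      have := (div_lt_iff₀ hcpos).mp hk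
      linarith [this]
    have hphk : ph k = (w 0).arg - ∑ i ∈ range k, θ i := by simp only [hph]
    rw [hphk]
    rw [hsum2] at hsum1
    linarith
  classical
  clear_value c ρ ph θ a w
  have hπ := Real.pi_pos
  obtain ⟨M, hML⟩ : ∃ M : ℤ, 2*π*(M:ℝ) + π ≤ ph 0 := by
    refine ⟨⌊((ph 0) - π)/(2*π)⌋, ?_⟩
    have h1 : (⌊((ph 0) - π)/(2*π)⌋:ℝ) ≤ ((ph 0) - π)/(2*π) := Int.floor_le _
    have h2 : (⌊((ph 0) - π)/(2*π)⌋:ℝ) * (2*π) ≤ (ph 0) - π := by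
      rw [← le_div_iff₀ (by positivity)]
      exact h1
    linarith
  have hex : ∃ k, ph k < 2*π*(M:ℝ) + π := hdiv _
  have hK : ph (Nat.find hex) < 2*π*(M:ℝ) + π := Nat.find_spec hex
  have hK0 : Nat.find hex ≠ 0 := by
    intro h0
    rw [h0] at hK
    linarith
  obtain ⟨K', hK'⟩ := Nat.exists_eq_succ_of_ne_zero hK0
  have hprev : ¬ (ph K' < 2*π*(M:ℝ) + π) := by
    apply Nat.find_min hex
    omega
  push_neg at hprev
  rw [hK'] at hK
  have h1 : ph (K'+1) = ph K' - θ K' := hphsucc K'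
  have h2 : 2*π*(M:ℝ) + π - π/2 < ph (K'+1) := by
    rw [h1]
    have := hθlt K'
    linarith
  have h3 : 0 < ph (K'+1) - 2*π*(M:ℝ) := by linarith
  have h4 : ph (K'+1) - 2*π*(M:ℝ) < π := by
    have : ph K'.succ = ph (K'+1) := rfl
    rw [this] at hK
    linarith
  have h5 : 0 < Real.sin (ph (K'+1) - 2*π*(M:ℝ)) := Real.sin_pos_of_pos_of_lt_pi h3 h4
  have h6 : Real.sin (ph (K'+1)) = Real.sin (ph (K'+1) - 2*π*(M:ℝ)) := by
    have h7 := Real.sin_add_int_mul_two_pi (ph (K'+1) - 2*π*(M:ℝ)) M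
    rw [show ph (K'+1) - 2*π*(M:ℝ) + (M:ℝ)*(2*π) = ph (K'+1) by ring] at h7
    exact h7
  have h8 := hsin (K'+1)
  rw [h6] at h8
  linarith

lemma key_lemma (Q R S : ℝ)
    (hne : ∀ n : ℕ, Q + R * (n:ℝ) + S * (n:ℝ)^2 ≠ 0)
    (hcm : CompletelyMonotone (fun n : ℕ => 1 / (Q + R * (n:ℝ) + S * (n:ℝ)^2))) :
    4 * Q * S ≤ R^2 := by
  set P : ℕ → ℝ := fun n => Q + R * (n:ℝ) + S * (n:ℝ)^2 with hP
  have hPpos : ∀ n, 0 < P n := by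
    intro n
    have h0 := hcm 0 n
    simp only [pow_zero, one_mul, Function.iterate_zero, id] at h0
    have h1 : (0:ℝ) ≤ 1 / P n := h0
    rcases lt_trichotomy (P n) 0 with h | h | h
    · exfalso
      have : 1 / P n < 0 := div_neg_of_pos_of_neg one_pos h
      linarith
    · exact absurd h (hne n)
    · exact h
  by_contra hcon
  push_neg at hcon
  have hS : 0 < S := by
    rcases lt_trichotomy S 0 with h | h | h
    · exfalso
      obtain ⟨n, hn⟩ := exists_nat_gt ((|Q| + |R| + 1)/(-S))
      have hn0 : (0:ℝ) < (n:ℝ) :=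
        lt_trans (div_pos (by positivity) (by linarith : (0:ℝ) < -S)) hn
      have hn1 : (1:ℝ) ≤ (n:ℝ) := by
        have : 1 ≤ n := by exact_mod_cast Nat.one_le_iff_ne_zero.mpr (by
          intro h0; rw [h0] at hn0; simp at hn0)
        exact_mod_cast this
      have hSn : S * (n:ℝ) < -(|Q| + |R| + 1) := by
        rw [div_lt_iff₀ (by linarith : (0:ℝ) < -S)] at hn
        nlinarith
      have hup : (S * (n:ℝ)) * (n:ℝ) ≤ -(|Q| + |R| + 1) * (n:ℝ) :=
        mul_le_mul_of_nonneg_right hSn.le hn0.le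
      have hQa : Q ≤ |Q| := le_abs_self Q
      have hRa : R * (n:ℝ) ≤ |R| * (n:ℝ) :=
        mul_le_mul_of_nonneg_right (le_abs_self R) hn0.le
      have hPn := hPpos n
      rw [hP] at hPn
      simp only at hPn
      nlinarith [mul_nonneg (by linarith : (0:ℝ) ≤ (n:ℝ) - 1) (abs_nonneg Q)]
    · rw [h] at hcon
      nlinarith [sq_nonneg R]
    · exact h
  have hQ : 0 < Q := by
    have := hPpos 0
    rw [hP] at this
    simpa using this
  have hD : 0 < 4*Q*S - R^2 := by linarith
  set τ : ℝ := Real.sqrt (4*Q*S - R^2) / (2*S) with hτdef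
  set σ : ℝ := -R / (2*S) with hσdef
  have hτpos : 0 < τ := div_pos (Real.sqrt_pos.2 hD) (by linarith)
  have hPfact : ∀ n : ℕ, P n = S * (((n:ℝ) - σ)^2 + τ^2) := by
    intro n
    rw [hP, hσdef, hτdef]
    have h1 : Real.sqrt (4*Q*S - R^2) ^ 2 = 4*Q*S - R^2 := Real.sq_sqrt hD.le
    have hS' : (2*S) ≠ 0 := ne_of_gt (by linarith)
    field_simp
    ring_nf at h1 ⊢
    linarith [h1]
  set α : ℂ := (σ:ℂ) + (τ:ℂ) * Complex.I with hα
  have hαim : ∀ j : ℕ, ((j:ℂ) - α).im = -τ := by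
    intro j; simp [hα]
  have hfacne : ∀ j : ℕ, (j:ℂ) - α ≠ 0 := by
    intro j h0
    have := congrArg Complex.im h0
    rw [hαim j] at this
    simp at this
    linarith
  have hIm1 : ∀ n : ℕ, 1 / P n = (1/(S*τ)) * (((n:ℂ) - α)⁻¹).im := by
    intro n
    have h1 : ((n:ℂ) - α).im = -τ := hαim n
    have h2 : ((n:ℂ) - α).re = (n:ℝ) - σ := by simp [hα]
    have h3 : (((n:ℂ) - α)⁻¹).im = τ / (((n:ℝ) - σ)^2 + τ^2) := by
      rw [Complex.inv_im, h1, Complex.normSq_apply, h1, h2]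
      ring_nf
    rw [h3, hPfact n]
    have h4 : (0:ℝ) < ((n:ℝ) - σ)^2 + τ^2 := by positivity
    field_simp
  have hsum : ∀ k : ℕ, 0 ≤ ∑ j ∈ range (k+1), (-1:ℝ)^j * (k.choose j) * (1 / P j) := by
    intro k
    have h0 := hcm k 0
    rw [alt_fdiff_eq_sum] at h0
    simpa using h0
  have hImP : ∀ k : ℕ, 0 ≤ ((∏ j ∈ range (k+1), ((j:ℂ) - α))⁻¹).im := by
    intro k
    have h1 := hsum k
    have hzim : ((-α) : ℂ).im ≠ 0 := by
      simp [hα]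
      exact hτpos.ne'
    have h4 : ∀ j : ℕ, (-α) + (j:ℂ) = (j:ℂ) - α := fun j => by ring
    have h3 : ∑ j ∈ range (k+1), (-1:ℂ)^j * (k.choose j) * ((j:ℂ) - α)⁻¹
        = (k ! : ℂ) * (∏ j ∈ range (k+1), ((j:ℂ) - α))⁻¹ := by
      have h3a := sum_choose_inv k (-α) hzim
      have e1 : ∑ j ∈ range (k+1), (-1:ℂ)^j * (k.choose j) * ((-α) + (j:ℂ))⁻¹
          = ∑ j ∈ range (k+1), (-1:ℂ)^j * (k.choose j) * ((j:ℂ) - α)⁻¹ := by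
        apply Finset.sum_congr rfl
        intro j _
        rw [h4 j]
      have e2 : ∏ j ∈ range (k+1), ((-α) + (j:ℂ)) = ∏ j ∈ range (k+1), ((j:ℂ) - α) := by
        apply Finset.prod_congr rfl
        intro j _
        rw [h4 j]
      rw [e1, e2] at h3a
      exact h3a
    have h5 : ∑ j ∈ range (k+1), (-1:ℝ)^j * (k.choose j) * (1 / P j)
        = (1/(S*τ)) * ((∑ j ∈ range (k+1), (-1:ℂ)^j * (k.choose j) * ((j:ℂ) - α)⁻¹).im) := by
      rw [Complex.im_sum, Finset.mul_sum]
      apply Finset.sum_congr rfl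
      intro j _
      rw [hIm1 j]
      have hc2 : ((-1:ℂ))^j * ((k.choose j : ℕ):ℂ) * ((j:ℂ) - α)⁻¹
          = (((-1:ℝ)^j * (k.choose j) : ℝ):ℂ) * ((j:ℂ) - α)⁻¹ := by
        push_cast
        ring
      rw [hc2, Complex.im_ofReal_mul]
      ring
    rw [h5, h3] at h1
    have h6 : ((k ! : ℂ) * (∏ j ∈ range (k+1), ((j:ℂ) - α))⁻¹).im
        = (k ! : ℝ) * ((∏ j ∈ range (k+1), ((j:ℂ) - α))⁻¹).im := by
      have : ((k ! : ℕ) : ℂ) = (((k ! : ℕ) : ℝ) : ℂ) := by push_cast; ring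
      rw [this, Complex.im_ofReal_mul]
    rw [h6] at h1
    have hfpos : (0:ℝ) < (k ! : ℝ) := by exact_mod_cast Nat.factorial_pos k
    have hSτ : (0:ℝ) < 1/(S*τ) := by positivity
    nlinarith [h1, mul_pos hSτ hfpos]
  apply winding σ τ hτpos
  intro k
  have h1 := hImP k
  have hprodne : (∏ j ∈ range (k+1), ((j:ℂ) - α)) ≠ 0 :=
    Finset.prod_ne_zero_iff.2 (fun j _ => hfacne j)
  rw [Complex.inv_im] at h1
  have h2 : 0 < Complex.normSq (∏ j ∈ range (k+1), ((j:ℂ) - α)) :=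
    Complex.normSq_pos.2 hprodne
  have h3 := (div_nonneg_iff.mp h1)
  rcases h3 with ⟨h4, _⟩ | ⟨_, h5⟩
  · simp only [hα] at h4 ⊢
    linarith
  · linarith

end Stmt2Aux

theorem stmt_2 (q r s : Polynomial ℝ)
    (p : ℕ → ℕ → ℝ)
    (hp : ∀ m n : ℕ, p m n =
      q.eval (m : ℝ) + r.eval (m : ℝ) * (n : ℝ) + s.eval (m : ℝ) * (n : ℝ) ^ 2)
    (hne : ∀ m n : ℕ, p m n ≠ 0)
    (hjcm : JointlyCompletelyMonotone (fun m n => 1 / p m n)) :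
    ∀ m : ℕ, 4 * q.eval (m : ℝ) * s.eval (m : ℝ) ≤ (r.eval (m : ℝ)) ^ 2 := by
  intro m
  set Q : ℝ := q.eval (m : ℝ) with hQ
  set R : ℝ := r.eval (m : ℝ) with hR
  set S : ℝ := s.eval (m : ℝ) with hS
  have hfun : (fun n : ℕ => 1 / p m n) = (fun n : ℕ => 1 / (Q + R * (n:ℝ) + S * (n:ℝ)^2)) := by
    funext n
    rw [hp m n]
  have hne' : ∀ n : ℕ, Q + R * (n:ℝ) + S * (n:ℝ)^2 ≠ 0 := by
    intro n
    rw [← hp m n]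
    exact hne m n
  have hcm : CompletelyMonotone (fun n : ℕ => 1 / (Q + R * (n:ℝ) + S * (n:ℝ)^2)) := by
    intro k n
    have h0 := hjcm 0 k m n
    simp only [Function.iterate_zero, id, zero_add] at h0
    rw [Stmt2Aux.fdiff2_iter k (fun m n => 1 / p m n) m] at h0
    rw [hfun] at h0
    exact h0
  exact Stmt2Aux.key_lemma Q R S hne' hcm
end
end

section
/- Let p₁, p₂: ℤ₊² → ℝ be positive functions such that (1/p₁(m,n)) and (1/p₂(m,n)) are jointly completely monotone nets, and let c₂ ≥ 0 satisfy p₁(m,n)p₂(m,n) − c₂ > 0 for all m, n ∈ ℤ₊. Then the net (1/(p₁(m,n)p₂(m,n) − c₂))_{m,n∈ℤ₊} is jointly completely monotone. -/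
noncomputable section

namespace JCMaux

lemma fd1_add (f g : ℕ → ℕ → ℝ) :
    fdiff1 (fun m n => f m n + g m n) = fun m n => fdiff1 f m n + fdiff1 g m n := by
  funext m n; simp [fdiff1]; ring

lemma fd2_add (f g : ℕ → ℕ → ℝ) :
    fdiff2 (fun m n => f m n + g m n) = fun m n => fdiff2 f m n + fdiff2 g m n := by
  funext m n; simp [fdiff2]; ring

lemma fd1_iter_add (i : ℕ) (f g : ℕ → ℕ → ℝ) :
    fdiff1^[i] (fun m n => f m n + g m n) = fun m n => fdiff1^[i] f m n + fdiff1^[i] g m n := by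
  induction i generalizing f g with
  | zero => rfl
  | succ i ih =>
      rw [Function.iterate_succ_apply, Function.iterate_succ_apply,
        Function.iterate_succ_apply, fd1_add, ih]

lemma fd2_iter_add (j : ℕ) (f g : ℕ → ℕ → ℝ) :
    fdiff2^[j] (fun m n => f m n + g m n) = fun m n => fdiff2^[j] f m n + fdiff2^[j] g m n := by
  induction j generalizing f g with
  | zero => rfl
  | succ j ih =>
      rw [Function.iterate_succ_apply, Function.iterate_succ_apply,
        Function.iterate_succ_apply, fd2_add, ih]

lemma D_add (i j : ℕ) (f g : ℕ → ℕ → ℝ) :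
    fdiff1^[i] (fdiff2^[j] (fun m n => f m n + g m n)) =
      fun m n => fdiff1^[i] (fdiff2^[j] f) m n + fdiff1^[i] (fdiff2^[j] g) m n := by
  rw [fd2_iter_add, fd1_iter_add]

lemma fd1_smul (c : ℝ) (f : ℕ → ℕ → ℝ) :
    fdiff1 (fun m n => c * f m n) = fun m n => c * fdiff1 f m n := by
  funext m n; simp [fdiff1]; ring

lemma fd2_smul (c : ℝ) (f : ℕ → ℕ → ℝ) :
    fdiff2 (fun m n => c * f m n) = fun m n => c * fdiff2 f m n := by
  funext m n; simp [fdiff2]; ring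

lemma fd1_iter_smul (i : ℕ) (c : ℝ) (f : ℕ → ℕ → ℝ) :
    fdiff1^[i] (fun m n => c * f m n) = fun m n => c * fdiff1^[i] f m n := by
  induction i generalizing f with
  | zero => rfl
  | succ i ih =>
      rw [Function.iterate_succ_apply, Function.iterate_succ_apply, fd1_smul, ih]

lemma fd2_iter_smul (j : ℕ) (c : ℝ) (f : ℕ → ℕ → ℝ) :
    fdiff2^[j] (fun m n => c * f m n) = fun m n => c * fdiff2^[j] f m n := by
  induction j generalizing f with
  | zero => rfl
  | succ j ih =>
      rw [Function.iterate_succ_apply, Function.iterate_succ_apply, fd2_smul, ih]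

lemma D_smul (i j : ℕ) (c : ℝ) (f : ℕ → ℕ → ℝ) :
    fdiff1^[i] (fdiff2^[j] (fun m n => c * f m n)) =
      fun m n => c * fdiff1^[i] (fdiff2^[j] f) m n := by
  rw [fd2_iter_smul, fd1_iter_smul]

lemma jcm_smul {a : ℕ → ℕ → ℝ} (ha : JointlyCompletelyMonotone a) {c : ℝ} (hc : 0 ≤ c) :
    JointlyCompletelyMonotone (fun m n => c * a m n) := by
  intro i j m n
  rw [D_smul]
  have := ha i j m n
  calc (0:ℝ) ≤ c * ((-1:ℝ)^(i+j) * fdiff1^[i] (fdiff2^[j] a) m n) := mul_nonneg hc this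
    _ = (-1:ℝ)^(i+j) * (c * fdiff1^[i] (fdiff2^[j] a) m n) := by ring

lemma jcm_add {a b : ℕ → ℕ → ℝ} (ha : JointlyCompletelyMonotone a)
    (hb : JointlyCompletelyMonotone b) :
    JointlyCompletelyMonotone (fun m n => a m n + b m n) := by
  intro i j m n
  rw [D_add]
  have h1 := ha i j m n
  have h2 := hb i j m n
  calc (0:ℝ) ≤ (-1:ℝ)^(i+j) * fdiff1^[i] (fdiff2^[j] a) m n
        + (-1:ℝ)^(i+j) * fdiff1^[i] (fdiff2^[j] b) m n := add_nonneg h1 h2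
    _ = _ := by ring

lemma fd1_fd2 (f : ℕ → ℕ → ℝ) : fdiff1 (fdiff2 f) = fdiff2 (fdiff1 f) := by
  funext m n; simp [fdiff1, fdiff2]; ring

lemma fd1_fd2_iter (j : ℕ) (f : ℕ → ℕ → ℝ) :
    fdiff1 (fdiff2^[j] f) = fdiff2^[j] (fdiff1 f) := by
  induction j generalizing f with
  | zero => rfl
  | succ j ih =>
      rw [Function.iterate_succ_apply, Function.iterate_succ_apply, ih, fd1_fd2]

lemma fd2_fd1_iter (i : ℕ) (f : ℕ → ℕ → ℝ) :
    fdiff2 (fdiff1^[i] f) = fdiff1^[i] (fdiff2 f) := by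
  induction i generalizing f with
  | zero => rfl
  | succ i ih =>
      rw [Function.iterate_succ_apply, Function.iterate_succ_apply, ih, fd1_fd2]

/-- shift in the first variable -/
lemma fd1_shift1 (f : ℕ → ℕ → ℝ) :
    fdiff1 (fun m n => f (m+1) n) = fun m n => fdiff1 f (m+1) n := rfl

lemma fd2_shift1 (f : ℕ → ℕ → ℝ) :
    fdiff2 (fun m n => f (m+1) n) = fun m n => fdiff2 f (m+1) n := rfl

lemma fd1_shift2 (f : ℕ → ℕ → ℝ) :
    fdiff1 (fun m n => f m (n+1)) = fun m n => fdiff1 f m (n+1) := rfl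

lemma fd2_shift2 (f : ℕ → ℕ → ℝ) :
    fdiff2 (fun m n => f m (n+1)) = fun m n => fdiff2 f m (n+1) := rfl

lemma fd1_iter_shift1 (i : ℕ) (f : ℕ → ℕ → ℝ) :
    fdiff1^[i] (fun m n => f (m+1) n) = fun m n => fdiff1^[i] f (m+1) n := by
  induction i generalizing f with
  | zero => rfl
  | succ i ih =>
      rw [Function.iterate_succ_apply, Function.iterate_succ_apply, fd1_shift1, ih]

lemma fd2_iter_shift1 (j : ℕ) (f : ℕ → ℕ → ℝ) :
    fdiff2^[j] (fun m n => f (m+1) n) = fun m n => fdiff2^[j] f (m+1) n := by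
  induction j generalizing f with
  | zero => rfl
  | succ j ih =>
      rw [Function.iterate_succ_apply, Function.iterate_succ_apply, fd2_shift1, ih]

lemma fd1_iter_shift2 (i : ℕ) (f : ℕ → ℕ → ℝ) :
    fdiff1^[i] (fun m n => f m (n+1)) = fun m n => fdiff1^[i] f m (n+1) := by
  induction i generalizing f with
  | zero => rfl
  | succ i ih =>
      rw [Function.iterate_succ_apply, Function.iterate_succ_apply, fd1_shift2, ih]

lemma fd2_iter_shift2 (j : ℕ) (f : ℕ → ℕ → ℝ) :
    fdiff2^[j] (fun m n => f m (n+1)) = fun m n => fdiff2^[j] f m (n+1) := by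
  induction j generalizing f with
  | zero => rfl
  | succ j ih =>
      rw [Function.iterate_succ_apply, Function.iterate_succ_apply, fd2_shift2, ih]

lemma jcm_shift1 {a : ℕ → ℕ → ℝ} (ha : JointlyCompletelyMonotone a) :
    JointlyCompletelyMonotone (fun m n => a (m+1) n) := by
  intro i j m n
  rw [fd2_iter_shift1, fd1_iter_shift1]
  exact ha i j (m+1) n

lemma jcm_shift2 {a : ℕ → ℕ → ℝ} (ha : JointlyCompletelyMonotone a) :
    JointlyCompletelyMonotone (fun m n => a m (n+1)) := by
  intro i j m n
  rw [fd2_iter_shift2, fd1_iter_shift2]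
  exact ha i j m (n+1)

lemma jcm_negd1 {a : ℕ → ℕ → ℝ} (ha : JointlyCompletelyMonotone a) :
    JointlyCompletelyMonotone (fun m n => a m n - a (m+1) n) := by
  intro i j m n
  have key : fdiff1^[i] (fdiff2^[j] (fun m n => a m n - a (m+1) n)) m n
      = -(fdiff1^[i+1] (fdiff2^[j] a) m n) := by
    have h0 : (fun m n => a m n - a (m+1) n) = fun m n => (-1:ℝ) * fdiff1 a m n := by
      funext m n; simp [fdiff1]
    rw [h0, D_smul]
    have : fdiff2^[j] (fdiff1 a) = fdiff1 (fdiff2^[j] a) := (fd1_fd2_iter j a).symm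
    rw [this, ← Function.iterate_succ_apply]
    ring
  rw [key]
  have := ha (i+1) j m n
  have hexp : (-1:ℝ)^(i+j) * -(fdiff1^[i+1] (fdiff2^[j] a) m n)
      = (-1:ℝ)^(i+1+j) * fdiff1^[i+1] (fdiff2^[j] a) m n := by
    rw [show i+1+j = (i+j)+1 by ring, pow_succ]; ring
  rw [hexp]; exact this

lemma jcm_negd2 {a : ℕ → ℕ → ℝ} (ha : JointlyCompletelyMonotone a) :
    JointlyCompletelyMonotone (fun m n => a m n - a m (n+1)) := by
  intro i j m n
  have key : fdiff1^[i] (fdiff2^[j] (fun m n => a m n - a m (n+1))) m n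
      = -(fdiff1^[i] (fdiff2^[j+1] a) m n) := by
    have h0 : (fun m n => a m n - a m (n+1)) = fun m n => (-1:ℝ) * fdiff2 a m n := by
      funext m n; simp [fdiff2]
    rw [h0, D_smul, ← Function.iterate_succ_apply]
    ring
  rw [key]
  have := ha i (j+1) m n
  have hexp : (-1:ℝ)^(i+j) * -(fdiff1^[i] (fdiff2^[j+1] a) m n)
      = (-1:ℝ)^(i+(j+1)) * fdiff1^[i] (fdiff2^[j+1] a) m n := by
    rw [show i+(j+1) = (i+j)+1 by ring, pow_succ]; ring
  rw [hexp]; exact this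

lemma leibniz1 (a b : ℕ → ℕ → ℝ) :
    fdiff1 (fun m n => a m n * b m n)
      = fun m n => a (m+1) n * fdiff1 b m n + fdiff1 a m n * b m n := by
  funext m n; simp [fdiff1]; ring

lemma leibniz2 (a b : ℕ → ℕ → ℝ) :
    fdiff2 (fun m n => a m n * b m n)
      = fun m n => a m (n+1) * fdiff2 b m n + fdiff2 a m n * b m n := by
  funext m n; simp [fdiff2]; ring

lemma jcm_mul_aux : ∀ s i j : ℕ, i + j = s → ∀ a b : ℕ → ℕ → ℝ,
    JointlyCompletelyMonotone a → JointlyCompletelyMonotone b →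
    ∀ m n : ℕ, 0 ≤ (-1:ℝ)^(i+j) * (fdiff1^[i] (fdiff2^[j] (fun m n => a m n * b m n))) m n := by
  intro s
  induction s with
  | zero =>
      intro i j hij a b ha hb m n
      obtain ⟨hi, hj⟩ := Nat.add_eq_zero.mp hij
      subst hi; subst hj
      simpa using mul_nonneg (by simpa using ha 0 0 m n) (by simpa using hb 0 0 m n)
  | succ s ih =>
      intro i j hij a b ha hb m n
      rcases i with _ | i
      · -- i = 0, so j = s+1
        rcases j with _ | j
        · omega
        have key : fdiff1^[0] (fdiff2^[j+1] (fun m n => a m n * b m n)) m n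
            = -(fdiff1^[0] (fdiff2^[j] (fun m n => (fun m n => a m (n+1)) m n *
                  (fun m n => b m n - b m (n+1)) m n)) m n
              + fdiff1^[0] (fdiff2^[j] (fun m n => (fun m n => a m n - a m (n+1)) m n *
                  b m n)) m n) := by
          simp only [Function.iterate_zero, id_eq]
          rw [Function.iterate_succ_apply, leibniz2]
          have hneg : (fun m n => a m (n+1) * fdiff2 b m n + fdiff2 a m n * b m n)
              = fun m n => (-1:ℝ) * ((fun m n => a m (n+1) * (b m n - b m (n+1))) m n
                  + (fun m n => (a m n - a m (n+1)) * b m n) m n) := by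
            funext m n; simp [fdiff2]; ring
          rw [hneg, fd2_iter_smul, fd2_iter_add]
          ring
        have h1 := ih 0 j (by omega) (fun m n => a m (n+1)) (fun m n => b m n - b m (n+1))
          (jcm_shift2 ha) (jcm_negd2 hb) m n
        have h2 := ih 0 j (by omega) (fun m n => a m n - a m (n+1)) b (jcm_negd2 ha) hb m n
        rw [key]
        have hpow : (-1:ℝ)^(0+(j+1)) = -((-1:ℝ)^(0+j)) := by
          rw [show 0+(j+1) = (0+j)+1 by ring, pow_succ]; ring
        rw [hpow]
        nlinarith [h1, h2]
      · -- i = i+1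
        have key : fdiff1^[i+1] (fdiff2^[j] (fun m n => a m n * b m n)) m n
            = -(fdiff1^[i] (fdiff2^[j] (fun m n => (fun m n => a (m+1) n) m n *
                  (fun m n => b m n - b (m+1) n) m n)) m n
              + fdiff1^[i] (fdiff2^[j] (fun m n => (fun m n => a m n - a (m+1) n) m n *
                  b m n)) m n) := by
          rw [Function.iterate_succ_apply, fd1_fd2_iter, leibniz1]
          have hneg : (fun m n => a (m+1) n * fdiff1 b m n + fdiff1 a m n * b m n)
              = fun m n => (-1:ℝ) * ((fun m n => a (m+1) n * (b m n - b (m+1) n)) m n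
                  + (fun m n => (a m n - a (m+1) n) * b m n) m n) := by
            funext m n; simp [fdiff1]; ring
          rw [hneg, fd2_iter_smul, fd1_iter_smul, fd2_iter_add, fd1_iter_add]
          ring
        have h1 := ih i j (by omega) (fun m n => a (m+1) n) (fun m n => b m n - b (m+1) n)
          (jcm_shift1 ha) (jcm_negd1 hb) m n
        have h2 := ih i j (by omega) (fun m n => a m n - a (m+1) n) b (jcm_negd1 ha) hb m n
        rw [key]
        have hpow : (-1:ℝ)^(i+1+j) = -((-1:ℝ)^(i+j)) := by
          rw [show i+1+j = (i+j)+1 by ring, pow_succ]; ring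
        rw [hpow]
        nlinarith [h1, h2]

lemma jcm_mul {a b : ℕ → ℕ → ℝ} (ha : JointlyCompletelyMonotone a)
    (hb : JointlyCompletelyMonotone b) :
    JointlyCompletelyMonotone (fun m n => a m n * b m n) := fun i j m n =>
  jcm_mul_aux (i+j) i j rfl a b ha hb m n

lemma jcm_pow {a : ℕ → ℕ → ℝ} (ha : JointlyCompletelyMonotone a) (k : ℕ) :
    JointlyCompletelyMonotone (fun m n => (a m n) ^ (k+1)) := by
  induction k with
  | zero => simpa using ha
  | succ k ih =>
      have := jcm_mul ha ih
      have heq : (fun m n => a m n * (a m n)^(k+1)) = fun m n => (a m n)^(k+1+1) := by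
        funext m n; rw [pow_succ]; ring
      rwa [heq] at this

open Filter Topology in
lemma tendsto_fd1 {a : ℕ → ℕ → ℕ → ℝ} {f : ℕ → ℕ → ℝ}
    (h : ∀ m n, Tendsto (fun N => a N m n) atTop (𝓝 (f m n))) :
    ∀ m n, Tendsto (fun N => fdiff1 (a N) m n) atTop (𝓝 (fdiff1 f m n)) := by
  intro m n
  exact (h (m+1) n).sub (h m n)

open Filter Topology in
lemma tendsto_fd2 {a : ℕ → ℕ → ℕ → ℝ} {f : ℕ → ℕ → ℝ}
    (h : ∀ m n, Tendsto (fun N => a N m n) atTop (𝓝 (f m n))) :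
    ∀ m n, Tendsto (fun N => fdiff2 (a N) m n) atTop (𝓝 (fdiff2 f m n)) := by
  intro m n
  exact (h m (n+1)).sub (h m n)

open Filter Topology in
lemma tendsto_D {a : ℕ → ℕ → ℕ → ℝ} {f : ℕ → ℕ → ℝ}
    (h : ∀ m n, Tendsto (fun N => a N m n) atTop (𝓝 (f m n))) (i j : ℕ) :
    ∀ m n, Tendsto (fun N => fdiff1^[i] (fdiff2^[j] (a N)) m n) atTop
      (𝓝 (fdiff1^[i] (fdiff2^[j] f) m n)) := by
  have hj : ∀ m n, Tendsto (fun N => fdiff2^[j] (a N) m n) atTop (𝓝 (fdiff2^[j] f m n)) := by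
    clear i
    induction j with
    | zero => simpa using h
    | succ j ih =>
        simp only [Function.iterate_succ_apply']
        exact tendsto_fd2 ih
  induction i with
  | zero => simpa using hj
  | succ i ih =>
      simp only [Function.iterate_succ_apply']
      exact tendsto_fd1 ih

open Filter Topology in
lemma jcm_of_tendsto {a : ℕ → ℕ → ℕ → ℝ} {f : ℕ → ℕ → ℝ}
    (ha : ∀ N, JointlyCompletelyMonotone (a N))
    (h : ∀ m n, Tendsto (fun N => a N m n) atTop (𝓝 (f m n))) :
    JointlyCompletelyMonotone f := by
  intro i j m n
  have ht : Tendsto (fun N => (-1:ℝ)^(i+j) * fdiff1^[i] (fdiff2^[j] (a N)) m n) atTop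
      (𝓝 ((-1:ℝ)^(i+j) * fdiff1^[i] (fdiff2^[j] f) m n)) :=
    (tendsto_D h i j m n).const_mul _
  exact ge_of_tendsto' ht (fun N => ha N i j m n)

end JCMaux

open JCMaux Filter Topology

theorem stmt_9 (p₁ p₂ : ℕ → ℕ → ℝ)
    (hp₁pos : ∀ m n, 0 < p₁ m n) (hp₂pos : ∀ m n, 0 < p₂ m n)
    (h₁ : JointlyCompletelyMonotone (fun m n => 1 / p₁ m n))
    (h₂ : JointlyCompletelyMonotone (fun m n => 1 / p₂ m n))
    (c₂ : ℝ) (hc₂ : 0 ≤ c₂)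
    (hpos : ∀ m n : ℕ, 0 < p₁ m n * p₂ m n - c₂) :
    JointlyCompletelyMonotone (fun m n => 1 / (p₁ m n * p₂ m n - c₂)) := by
  have hP : JointlyCompletelyMonotone (fun m n => 1 / (p₁ m n * p₂ m n)) := by
    have := jcm_mul h₁ h₂
    have heq : (fun m n => (1 / p₁ m n) * (1 / p₂ m n)) = fun m n => 1 / (p₁ m n * p₂ m n) := by
      funext m n; rw [one_div_mul_one_div]
    rwa [heq] at this
  -- partial sums
  set S : ℕ → ℕ → ℕ → ℝ := fun N m n => ∑ k ∈ Finset.range N, c₂^k * (1 / (p₁ m n * p₂ m n))^(k+1)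
    with hS
  have hSjcm : ∀ N, JointlyCompletelyMonotone (S N) := by
    intro N
    induction N with
    | zero =>
        simp only [hS, Finset.range_zero, Finset.sum_empty]
        intro i j m n
        have hz : (fun (_ : ℕ) (_ : ℕ) => (0:ℝ)) = fun m n => (0:ℝ) * (1:ℝ) := by
          funext m n; ring
        rw [hz, D_smul]
        simp
    | succ N ih =>
        have hterm : JointlyCompletelyMonotone
            (fun m n => c₂^N * (1 / (p₁ m n * p₂ m n))^(N+1)) :=
          jcm_smul (jcm_pow hP N) (pow_nonneg hc₂ N)
        have := jcm_add ih hterm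
        have heq : (fun m n => S N m n + c₂^N * (1 / (p₁ m n * p₂ m n))^(N+1)) = S (N+1) := by
          funext m n; simp [hS, Finset.sum_range_succ]
        rwa [heq] at this
  have hlim : ∀ m n, Tendsto (fun N => S N m n) atTop (𝓝 (1 / (p₁ m n * p₂ m n - c₂))) := by
    intro m n
    set P := p₁ m n * p₂ m n with hPdef
    have hPpos : 0 < P := mul_pos (hp₁pos m n) (hp₂pos m n)
    have hcP : c₂ < P := by have := hpos m n; linarith
    have hr0 : 0 ≤ c₂ / P := div_nonneg hc₂ hPpos.le
    have hr1 : c₂ / P < 1 := (div_lt_one hPpos).mpr hcP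
    have hgeom : HasSum (fun k => (1/P) * (c₂/P)^k) ((1/P) * (1 - c₂/P)⁻¹) :=
      (hasSum_geometric_of_lt_one hr0 hr1).mul_left _
    have hterm : ∀ k, (1/P) * (c₂/P)^k = c₂^k * (1/P)^(k+1) := by
      intro k
      simp only [one_div, div_pow, div_eq_mul_inv, inv_pow]
      ring
    have hval : (1/P) * (1 - c₂/P)⁻¹ = 1 / (P - c₂) := by
      have hPne : P ≠ 0 := ne_of_gt hPpos
      have h2 : P - c₂ ≠ 0 := ne_of_gt (hpos m n)
      rw [eq_div_iff h2]
      field_simp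
    rw [show (fun k => (1/P) * (c₂/P)^k) = fun k => c₂^k * (1/P)^(k+1) from funext hterm,
      hval] at hgeom
    have := hgeom.tendsto_sum_nat
    simpa only [hS] using this
  exact jcm_of_tendsto hSjcm hlim
end
end

section
/- Let c > 0 and d ∈ ℝ with c + dm > 0 for all m ∈ ℤ₊, and define p(m,n) = 1 + am + bm² + (c + dm)n for real a, b. If b > 0 and (1/p(m,n))_{m,n∈ℤ₊} is a jointly completely monotone net with d > 0, then the roots −r₁ ≤ −r₂ of the quadratic 1 + ax + bx² are real and satisfy r₂ ≤ c/d ≤ r₁; i.e., writing 1 + ax + bx² = b(x+r₂)(x+r₁), one has r₂ ≤ c/d ≤ r₁. -/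
noncomputable section

open Finset

lemma fdiff_iter_shift (a : ℕ → ℝ) (i : ℕ) (v : ℕ) :
    (fdiff^[i] (fun n => a (n + 1))) v = (fdiff^[i] a) (v + 1) := by
  induction i generalizing a v with
  | zero => simp
  | succ i ih =>
    rw [Function.iterate_succ_apply, Function.iterate_succ_apply]
    have : fdiff (fun n => a (n + 1)) = fun n => (fdiff a) (n + 1) := by
      funext n; simp [fdiff]
    rw [this, ih]

/-- moment sums against the Hausdorff row. -/
def Smom (φ : ℕ → ℝ) (a : ℕ → ℝ) (k : ℕ) : ℝ :=
  ∑ v ∈ range (k + 1), φ v * (k.choose v : ℝ) * ((-1 : ℝ) ^ (k - v) * (fdiff^[k - v] a) v)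

lemma Smom_step (φ : ℕ → ℝ) (a : ℕ → ℝ) (k : ℕ) :
    Smom φ a (k + 1) =
      Smom φ a k + Smom (fun v => φ (v + 1) - φ v) (fun n => a (n + 1)) k := by
  set T : ℕ → ℝ := fun v => (-1 : ℝ) ^ (k + 1 - v) * (fdiff^[k + 1 - v] a) v with hT
  have hS : Smom φ a (k + 1) = ∑ v ∈ range (k + 2), φ v * ((k+1).choose v : ℝ) * T v := rfl
  -- A := sum with lower binomial
  set A : ℝ := ∑ v ∈ range (k + 2), φ v * (k.choose v : ℝ) * T v with hA
  set B : ℝ := ∑ v ∈ range (k + 1), φ (v+1) * (k.choose v : ℝ) * T (v+1) with hB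
  have split : Smom φ a (k + 1) = A + B := by
    rw [hS, Finset.sum_range_succ' (fun v => φ v * ((k+1).choose v : ℝ) * T v) (k+1),
        hA, Finset.sum_range_succ' (fun v => φ v * (k.choose v : ℝ) * T v) (k+1), hB]
    have : ∀ v ∈ range (k+1),
        φ (v+1) * ((k+1).choose (v+1) : ℝ) * T (v+1)
          = φ (v+1) * (k.choose (v+1) : ℝ) * T (v+1) + φ (v+1) * (k.choose v : ℝ) * T (v+1) := by
      intro v _
      rw [Nat.choose_succ_succ]
      push_cast
      ring
    rw [Finset.sum_congr rfl this, Finset.sum_add_distrib]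
    simp [Nat.choose_zero_right]
    ring
  have hAval : A = Smom φ a k - ∑ v ∈ range (k + 1),
      φ v * (k.choose v : ℝ) * ((-1 : ℝ) ^ (k - v) * (fdiff^[k - v] a) (v + 1)) := by
    rw [hA, Finset.sum_range_succ]
    have hlast : (k.choose (k+1) : ℝ) = 0 := by
      simp [Nat.choose_eq_zero_of_lt]
    rw [hlast]
    have hterm : ∀ v ∈ range (k+1), φ v * (k.choose v : ℝ) * T v
        = φ v * (k.choose v : ℝ) * ((-1:ℝ)^(k-v) * (fdiff^[k-v] a) v)
          - φ v * (k.choose v : ℝ) * ((-1:ℝ)^(k-v) * (fdiff^[k-v] a) (v+1)) := by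
      intro v hv
      have hvk : v ≤ k := by simpa using Nat.lt_succ_iff.mp (mem_range.mp hv)
      have h1 : k + 1 - v = (k - v) + 1 := by omega
      rw [hT]
      simp only [h1]
      rw [Function.iterate_succ_apply']
      simp only [fdiff]
      ring
    rw [Finset.sum_congr rfl hterm, Finset.sum_sub_distrib]
    simp [Smom]
  have hBval : B = ∑ v ∈ range (k + 1),
      φ (v+1) * (k.choose v : ℝ) * ((-1 : ℝ) ^ (k - v) * (fdiff^[k - v] a) (v + 1)) := by
    rw [hB]
    apply Finset.sum_congr rfl
    intro v hv
    have hvk : v ≤ k := by simpa using Nat.lt_succ_iff.mp (mem_range.mp hv)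
    have h1 : k + 1 - (v + 1) = k - v := by omega
    rw [hT]
    simp only [h1]
  have key : ∀ v ∈ range (k+1),
      (fun v => φ (v+1) - φ v) v * (k.choose v : ℝ)
        * ((-1:ℝ)^(k-v) * (fdiff^[k-v] (fun n => a (n+1))) v)
      = φ (v+1) * (k.choose v : ℝ) * ((-1:ℝ)^(k-v) * (fdiff^[k-v] a) (v+1))
        - φ v * (k.choose v : ℝ) * ((-1:ℝ)^(k-v) * (fdiff^[k-v] a) (v+1)) := by
    intro v _
    rw [fdiff_iter_shift]
    ring
  have hC : Smom (fun v => φ (v + 1) - φ v) (fun n => a (n + 1)) k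
      = (∑ v ∈ range (k + 1), φ (v+1) * (k.choose v : ℝ) * ((-1 : ℝ) ^ (k - v) * (fdiff^[k - v] a) (v + 1)))
        - ∑ v ∈ range (k + 1), φ v * (k.choose v : ℝ) * ((-1 : ℝ) ^ (k - v) * (fdiff^[k - v] a) (v + 1)) := by
    simp only [Smom]
    rw [Finset.sum_congr rfl key, Finset.sum_sub_distrib]
  rw [split, hAval, hBval, hC]
  ring

lemma Smom_one (a : ℕ → ℝ) (k : ℕ) : Smom (fun _ => 1) a k = a 0 := by
  induction k generalizing a with
  | zero => simp [Smom]
  | succ k ih =>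
    rw [Smom_step, ih a]
    simp [Smom]

lemma Smom_id (a : ℕ → ℝ) (k : ℕ) : Smom (fun v => (v : ℝ)) a k = k * a 1 := by
  induction k generalizing a with
  | zero => simp [Smom]
  | succ k ih =>
    rw [Smom_step, ih a]
    have h1 : Smom (fun v => ((v+1 : ℕ) : ℝ) - (v:ℝ)) (fun n => a (n+1)) k
        = Smom (fun _ => 1) (fun n => a (n+1)) k := by
      apply Finset.sum_congr rfl; intro v _; push_cast; ring
    rw [h1, Smom_one]
    push_cast
    ring

lemma Smom_sq (a : ℕ → ℝ) (k : ℕ) :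
    Smom (fun v => (v : ℝ) * ((v : ℝ) - 1)) a k = k * ((k:ℝ) - 1) * a 2 := by
  induction k generalizing a with
  | zero => simp [Smom]
  | succ k ih =>
    rw [Smom_step, ih a]
    have h1 : Smom (fun v => ((v+1 : ℕ) : ℝ) * (((v+1 : ℕ) : ℝ) - 1) - (v:ℝ) * ((v:ℝ) - 1))
          (fun n => a (n+1)) k
        = 2 * Smom (fun v => (v : ℝ)) (fun n => a (n+1)) k := by
      rw [Smom, Smom, Finset.mul_sum]
      apply Finset.sum_congr rfl; intro v _; push_cast; ring
    rw [h1, Smom_id]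
    push_cast
    ring

/-- Completely monotone sequences are log-convex at 0. -/
lemma cm_logconvex {a : ℕ → ℝ} (h : CompletelyMonotone a) :
    (a 1) ^ 2 ≤ a 0 * a 2 := by
  set lam : ℕ → ℕ → ℝ :=
    fun k v => (k.choose v : ℝ) * ((-1 : ℝ) ^ (k - v) * (fdiff^[k - v] a) v) with hlam
  have hlamnn : ∀ k v, 0 ≤ lam k v :=
    fun k v => mul_nonneg (by positivity) (h (k - v) v)
  have ha0 : 0 ≤ a 0 := by simpa using h 0 0
  have ha1 : 0 ≤ a 1 := by simpa using h 0 1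
  have ha2 : 0 ≤ a 2 := by simpa using h 0 2
  have key : ∀ k : ℕ, 1 ≤ k → (k:ℝ) * a 1 - a 0 ≤ (k:ℝ) * Real.sqrt (a 0 * a 2) := by
    intro k hk
    have hI0 : ∑ v ∈ range (k+1), lam k v = a 0 := by
      simpa [Smom, hlam] using Smom_one a k
    have hI1 : ∑ v ∈ range (k+1), (v:ℝ) * lam k v = k * a 1 := by
      have h2 := Smom_id a k
      simp only [Smom] at h2
      rw [← h2]
      apply Finset.sum_congr rfl; intro v _; rw [hlam]; ring
    have hI2 : ∑ v ∈ range (k+1), (v:ℝ) * ((v:ℝ) - 1) * lam k v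
        = k * ((k:ℝ) - 1) * a 2 := by
      have h2 := Smom_sq a k
      simp only [Smom] at h2
      rw [← h2]
      apply Finset.sum_congr rfl; intro v _; rw [hlam]; ring
    set f : ℕ → ℝ := fun v => Real.sqrt (lam k v) with hf
    set g : ℕ → ℝ := fun v => Real.sqrt ((v:ℝ) * ((v:ℝ) - 1) * lam k v) with hg
    have hvv : ∀ v : ℕ, 0 ≤ (v:ℝ) * ((v:ℝ) - 1) := by
      intro v
      rcases Nat.eq_zero_or_pos v with h0 | h1
      · simp [h0]
      · have : (1:ℝ) ≤ (v:ℝ) := by exact_mod_cast h1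
        nlinarith
    have cs := Finset.sum_mul_sq_le_sq_mul_sq (range (k+1)) f g
    have hf2 : ∑ v ∈ range (k+1), f v ^ 2 = a 0 := by
      rw [← hI0]; apply Finset.sum_congr rfl; intro v _
      rw [hf]; simp [Real.sq_sqrt (hlamnn k v)]
    have hg2 : ∑ v ∈ range (k+1), g v ^ 2 = (k:ℝ) * ((k:ℝ) - 1) * a 2 := by
      rw [← hI2]; apply Finset.sum_congr rfl; intro v _
      rw [hg]; simp [Real.sq_sqrt (mul_nonneg (hvv v) (hlamnn k v))]
    have hfg : ∀ v ∈ range (k+1), ((v:ℝ) - 1) * lam k v ≤ f v * g v := by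
      intro v _
      rw [hf, hg]
      have heq : Real.sqrt (lam k v) * Real.sqrt ((v:ℝ) * ((v:ℝ) - 1) * lam k v)
          = Real.sqrt ((v:ℝ) * ((v:ℝ) - 1)) * lam k v := by
        rw [← Real.sqrt_mul (hlamnn k v)]
        rw [show lam k v * ((v:ℝ) * ((v:ℝ) - 1) * lam k v)
            = ((v:ℝ) * ((v:ℝ) - 1)) * (lam k v)^2 by ring]
        rw [Real.sqrt_mul (hvv v), Real.sqrt_sq (hlamnn k v)]
      rw [heq]
      apply mul_le_mul_of_nonneg_right _ (hlamnn k v)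
      rcases le_or_gt ((v:ℝ) - 1) 0 with hneg | hpos
      · exact hneg.trans (Real.sqrt_nonneg _)
      · have hsq := Real.sqrt_le_sqrt
          (show ((v:ℝ)-1)^2 ≤ (v:ℝ)*((v:ℝ)-1) by nlinarith)
        rwa [Real.sqrt_sq hpos.le] at hsq
    have hsum1 : ∑ v ∈ range (k+1), ((v:ℝ) - 1) * lam k v = (k:ℝ) * a 1 - a 0 := by
      rw [← hI1, ← hI0, ← Finset.sum_sub_distrib]
      apply Finset.sum_congr rfl; intro v _; ring
    have hsum : (k:ℝ) * a 1 - a 0 ≤ ∑ v ∈ range (k+1), f v * g v := by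
      rw [← hsum1]; exact Finset.sum_le_sum hfg
    have hk1 : (1:ℝ) ≤ (k:ℝ) := by exact_mod_cast hk
    have hB : (∑ v ∈ range (k+1), f v * g v)^2 ≤ ((k:ℝ) * Real.sqrt (a 0 * a 2))^2 := by
      have h3 : (∑ v ∈ range (k+1), f v * g v)^2 ≤ a 0 * ((k:ℝ) * ((k:ℝ) - 1) * a 2) := by
        rw [← hf2, ← hg2]; exact cs
      rw [mul_pow, Real.sq_sqrt (mul_nonneg ha0 ha2)]
      nlinarith [mul_nonneg ha0 ha2]
    have hfinal : ∑ v ∈ range (k+1), f v * g v ≤ (k:ℝ) * Real.sqrt (a 0 * a 2) := by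
      calc ∑ v ∈ range (k+1), f v * g v ≤ |∑ v ∈ range (k+1), f v * g v| := le_abs_self _
        _ = Real.sqrt ((∑ v ∈ range (k+1), f v * g v)^2) := (Real.sqrt_sq_eq_abs _).symm
        _ ≤ Real.sqrt (((k:ℝ) * Real.sqrt (a 0 * a 2))^2) := Real.sqrt_le_sqrt hB
        _ = (k:ℝ) * Real.sqrt (a 0 * a 2) := Real.sqrt_sq (by positivity)
    linarith
  have lim : a 1 ≤ Real.sqrt (a 0 * a 2) := by
    apply le_of_forall_pos_le_add
    intro ε hε
    obtain ⟨k, hk⟩ := exists_nat_gt (max 1 (a 0 / ε))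
    have hk1' : (1:ℝ) < k := lt_of_le_of_lt (le_max_left _ _) hk
    have hk1 : 1 ≤ k := by exact_mod_cast hk1'.le
    have hkpos : (0:ℝ) < k := by linarith
    have h' : (k:ℝ) * a 1 ≤ (k:ℝ) * (Real.sqrt (a 0 * a 2) + a 0 / k) := by
      rw [mul_add, mul_div_cancel₀ _ (ne_of_gt hkpos)]
      linarith [key k hk1]
    have h'' : a 1 ≤ Real.sqrt (a 0 * a 2) + a 0 / k :=
      le_of_mul_le_mul_left h' hkpos
    have hak : a 0 / k < ε := by
      rw [div_lt_iff₀ hkpos]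
      have h2 : a 0 / ε < k := lt_of_le_of_lt (le_max_right _ _) hk
      rw [div_lt_iff₀ hε] at h2
      linarith
    linarith
  calc (a 1)^2 ≤ (Real.sqrt (a 0 * a 2))^2 := pow_le_pow_left₀ ha1 lim 2
  _ = a 0 * a 2 := Real.sq_sqrt (mul_nonneg ha0 ha2)

lemma fdiff1_iter_eval (H : ℕ → ℕ → ℝ) (i m n : ℕ) :
    (fdiff^[i] (fun m => H m n)) m = (fdiff1^[i] H) m n := by
  induction i generalizing H with
  | zero => rfl
  | succ i ih =>
    rw [Function.iterate_succ_apply, Function.iterate_succ_apply]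
    have h : fdiff (fun m => H m n) = fun m => (fdiff1 H) m n := rfl
    rw [h]
    exact ih (fdiff1 H)

lemma fdiff_iter_const_mul (C : ℝ) (h : ℕ → ℝ) (k n : ℕ) :
    (fdiff^[k] (fun n => C * h n)) n = C * (fdiff^[k] h) n := by
  induction k generalizing h n with
  | zero => rfl
  | succ k ih =>
    rw [Function.iterate_succ_apply, Function.iterate_succ_apply]
    have h1 : fdiff (fun n => C * h n) = fun n => C * (fdiff h) n := by
      funext n; simp only [fdiff]; ring
    rw [h1]
    exact ih (fdiff h) n

lemma one_add_sum_le_prod (s : Finset ℕ) (f : ℕ → ℝ) (h : ∀ i ∈ s, 0 ≤ f i) :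
    1 + ∑ i ∈ s, f i ≤ ∏ i ∈ s, (1 + f i) := by
  classical
  induction s using Finset.cons_induction with
  | empty => simp
  | cons i s his ih =>
    rw [Finset.sum_cons, Finset.prod_cons]
    have hfi : 0 ≤ f i := h i (Finset.mem_cons_self i s)
    have hrest : ∀ j ∈ s, 0 ≤ f j := fun j hj => h j (Finset.mem_cons_of_mem hj)
    have hsum : 0 ≤ ∑ j ∈ s, f j := Finset.sum_nonneg hrest
    have ih' := ih hrest
    nlinarith [ih', hfi, hsum]

set_option maxHeartbeats 1000000 in
lemma key_ineq (a b c d : ℝ) (hc : 0 < c) (hd : 0 < d) (hb : 0 < b)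
    (hcd : ∀ m : ℕ, 0 < c + d * (m : ℝ))
    (hjcm : JointlyCompletelyMonotone (fun m n =>
      1 / (1 + a * (m : ℝ) + b * (m : ℝ) ^ 2 + (c + d * (m : ℝ)) * (n : ℝ)))) :
    d ^ 2 - a * c * d + b * c ^ 2 ≤ 0 := by
  by_contra hT
  push_neg at hT
  set F : ℕ → ℕ → ℝ := fun m n =>
    1 / (1 + a * (m : ℝ) + b * (m : ℝ) ^ 2 + (c + d * (m : ℝ)) * (n : ℝ)) with hFdef
  set p : ℕ → ℕ → ℝ := fun m n =>
    1 + a * (m : ℝ) + b * (m : ℝ) ^ 2 + (c + d * (m : ℝ)) * (n : ℝ) with hpdef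
  set L : ℕ → ℝ := fun m => c + d * (m : ℝ) with hLdef
  have hL : ∀ m : ℕ, 0 < L m := fun m => hcd m
  -- nonnegativity and monotonicity in n
  have hFnn : ∀ m n, 0 ≤ F m n := by
    intro m n
    simpa using hjcm 0 0 m n
  have hdec : ∀ m n, F m (n + 1) ≤ F m n := by
    intro m n
    have := hjcm 0 1 m n
    simp only [Function.iterate_zero, Function.iterate_one, id_eq, pow_one, zero_add,
      fdiff2] at this
    linarith
  have hdec' : ∀ m n k, F m (n + k) ≤ F m n := by
    intro m n k
    induction k with
    | zero => simp
    | succ k ih =>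
      have h1 : F m (n + (k+1)) ≤ F m (n + k) := by
        have := hdec m (n + k)
        simpa [Nat.add_assoc] using this
      exact le_trans h1 ih
  -- positivity of p
  have hppos : ∀ m n, 0 < p m n := by
    intro m n
    rw [← one_div_pos (a := p m n)]
    obtain ⟨N, hN⟩ := exists_nat_gt (max (n : ℝ) ((0 - (1 + a*(m:ℝ) + b*(m:ℝ)^2)) / L m))
    have hNn : n ≤ N := by
      have : (n:ℝ) < N := lt_of_le_of_lt (le_max_left _ _) hN
      exact_mod_cast this.le
    have hpN : 0 < p m N := by
      have h2 : (0 - (1 + a*(m:ℝ) + b*(m:ℝ)^2)) / L m < N :=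
        lt_of_le_of_lt (le_max_right _ _) hN
      rw [div_lt_iff₀ (hL m)] at h2
      simp only [hpdef]
      simp only [hLdef] at h2
      nlinarith [hL m]
    have hFN : 0 < F m N := by
      rw [hFdef]
      exact one_div_pos.mpr hpN
    have : F m N ≤ F m n := by
      obtain ⟨k, rfl⟩ := Nat.exists_eq_add_of_le hNn
      exact hdec' m n k
    exact lt_of_lt_of_le hFN this
  -- closed form for fdiff2 iterates
  have hclosed : ∀ j m n, (fdiff2^[j] F) m n * (∏ k ∈ range (j+1), p m (n+k))
      = (-1:ℝ)^j * (Nat.factorial j : ℝ) * (L m)^j := by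
    intro j m
    induction j with
    | zero =>
      intro n
      have hFp : F m n = 1 / p m n := rfl
      simp only [Function.iterate_zero, id_eq, Nat.zero_add, zero_add, range_one, Finset.prod_singleton,
        Nat.add_zero, pow_zero, Nat.factorial_zero, Nat.cast_one]
      rw [hFp, one_div, inv_mul_cancel₀ (ne_of_gt (hppos m n))]
      norm_num
    | succ j ih =>
      intro n
      have hit : (fdiff2^[j+1] F) m n
          = (fdiff2^[j] F) m (n+1) - (fdiff2^[j] F) m n := by
        rw [Function.iterate_succ_apply']
        rfl
      have hP2a : (∏ k ∈ range (j+1+1), p m (n+k))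
          = (∏ k ∈ range (j+1), p m ((n+1)+k)) * p m n := by
        rw [Finset.prod_range_succ' (fun k => p m (n+k)) (j+1)]
        rw [Nat.add_zero]
        congr 1
        apply Finset.prod_congr rfl; intro k _; congr 1; omega
      have hP2b : (∏ k ∈ range (j+1+1), p m (n+k))
          = (∏ k ∈ range (j+1), p m (n+k)) * p m (n+(j+1)) := by
        rw [Finset.prod_range_succ]
      have hX := ih (n+1)
      have hY := ih n
      have hdiffp : p m n - p m (n+(j+1)) = -((j:ℝ)+1) * L m := by
        simp only [hpdef, hLdef]
        push_cast
        ring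
      calc (fdiff2^[j+1] F) m n * (∏ k ∈ range (j+1+1), p m (n+k))
          = (fdiff2^[j] F) m (n+1) * (∏ k ∈ range (j+1+1), p m (n+k))
            - (fdiff2^[j] F) m n * (∏ k ∈ range (j+1+1), p m (n+k)) := by
            rw [hit]; ring
        _ = ((fdiff2^[j] F) m (n+1) * (∏ k ∈ range (j+1), p m ((n+1)+k))) * p m n
            - ((fdiff2^[j] F) m n * (∏ k ∈ range (j+1), p m (n+k))) * p m (n+(j+1)) := by
            nth_rewrite 1 [hP2a]
            rw [hP2b]
            ring
        _ = ((-1:ℝ)^j * (Nat.factorial j : ℝ) * (L m)^j) * (p m n - p m (n+(j+1))) := by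
            rw [hX, hY]; ring
        _ = (-1:ℝ)^(j+1) * (Nat.factorial (j+1) : ℝ) * (L m)^(j+1) := by
            rw [hdiffp, Nat.factorial_succ]
            push_cast
            ring
  -- complete monotonicity of m ↦ (-1)^j Δ₂^j F (m,0)
  have hcmG : ∀ j : ℕ, CompletelyMonotone (fun m => (-1:ℝ)^j * (fdiff2^[j] F) m 0) := by
    intro j k m
    have h1 : (fdiff^[k] (fun m => (-1:ℝ)^j * (fdiff2^[j] F) m 0)) m
        = (-1:ℝ)^j * (fdiff1^[k] (fdiff2^[j] F)) m 0 := by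
      rw [fdiff_iter_const_mul ((-1:ℝ)^j) (fun m => (fdiff2^[j] F) m 0) k m,
        fdiff1_iter_eval]
    rw [h1]
    have := hjcm k j m 0
    calc (0:ℝ) ≤ (-1:ℝ)^(k+j) * (fdiff1^[k] (fdiff2^[j] F)) m 0 := this
      _ = (-1:ℝ)^k * ((-1:ℝ)^j * (fdiff1^[k] (fdiff2^[j] F)) m 0) := by
          rw [pow_add]; ring
  -- abbreviations for the three columns
  have hq : ∀ i : ℕ, 0 < 1 + a * (i:ℝ) + b * (i:ℝ)^2 := by
    intro i
    have h := hppos i 0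
    simpa [hpdef] using h
  set u : ℕ → ℝ := fun i => (1 + a * (i:ℝ) + b * (i:ℝ)^2) / L i with hudef
  have hupos : ∀ i, 0 < u i := fun i => div_pos (hq i) (hL i)
  set Q : ℕ → ℕ → ℝ := fun i j => ∏ k ∈ range (j+1), (u i + (k:ℝ)) with hQdef
  have hQpos : ∀ i j, 0 < Q i j := by
    intro i j
    exact Finset.prod_pos (fun k _ => by have := hupos i; positivity)
  have hpk : ∀ (i k : ℕ), p i k = L i * (u i + (k:ℝ)) := by
    intro i k
    have h1 : L i * u i = 1 + a*(i:ℝ) + b*(i:ℝ)^2 := by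
      rw [hudef]; exact mul_div_cancel₀ _ (ne_of_gt (hL i))
    simp only [hpdef]
    rw [mul_add, h1]
  have hPd : ∀ (i : ℕ) (j : ℕ), (∏ k ∈ range (j+1), p i k) = (L i)^(j+1) * Q i j := by
    intro i j
    rw [hQdef]
    calc (∏ k ∈ range (j+1), p i k) = ∏ k ∈ range (j+1), (L i * (u i + (k:ℝ))) := by
          apply Finset.prod_congr rfl; intro k _; exact hpk i k
      _ = (∏ _k ∈ range (j+1), L i) * ∏ k ∈ range (j+1), (u i + (k:ℝ)) :=
          Finset.prod_mul_distrib
      _ = (L i)^(j+1) * ∏ k ∈ range (j+1), (u i + (k:ℝ)) := by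
          rw [Finset.prod_const, Finset.card_range]
  -- the master inequality for every j
  have hQineq : ∀ j : ℕ, (L 0 * L 2) * (Q 0 j * Q 2 j) ≤ (L 1)^2 * (Q 1 j)^2 := by
    intro j
    set X : ℕ → ℝ := fun m => (fdiff2^[j] F) m 0 with hX
    set f : ℝ := (Nat.factorial j : ℝ) with hf
    set P : ℕ → ℝ := fun m => ∏ k ∈ range (j+1), p m k with hP
    have hs2 : ((-1:ℝ)^j)^2 = 1 := by
      rw [← pow_mul, mul_comm, pow_mul, neg_one_sq, one_pow]
    have hsq : (X 1)^2 ≤ X 0 * X 2 := by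
      have hlc : ((-1:ℝ)^j * X 1)^2 ≤ ((-1:ℝ)^j * X 0) * ((-1:ℝ)^j * X 2) :=
        cm_logconvex (hcmG j)
      have e1 : ((-1:ℝ)^j * X 1)^2 = (X 1)^2 := by
        rw [mul_pow, hs2, one_mul]
      have e2 : ((-1:ℝ)^j * X 0) * ((-1:ℝ)^j * X 2) = ((-1:ℝ)^j)^2 * (X 0 * X 2) := by ring
      rw [e1, e2, hs2, one_mul] at hlc
      exact hlc
    have hcf : ∀ m : ℕ, X m * P m = (-1:ℝ)^j * f * (L m)^j := by
      intro m
      have h := hclosed j m 0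
      simp only [Nat.zero_add, zero_add] at h
      exact h
    have hfpos : 0 < f := by rw [hf]; exact_mod_cast Nat.factorial_pos j
    have hPpos : ∀ m, 0 < P m := fun m => Finset.prod_pos (fun k _ => hppos m k)
    have hPdP : ∀ i : ℕ, P i = (L i)^(j+1) * Q i j := fun i => hPd i j
    have hmul : (X 1)^2 * (P 0 * P 2 * (P 1)^2) ≤ (X 0 * X 2) * (P 0 * P 2 * (P 1)^2) := by
      apply mul_le_mul_of_nonneg_right hsq
      have := hPpos 0; have := hPpos 1; have := hPpos 2
      positivity
    have key1 : (X 1)^2 * (P 0 * P 2 * (P 1)^2)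
        = (f^2 * ((L 1)^(2*j) * (L 0)^j * (L 2)^j))
          * ((L 0 * L 2) * (Q 0 j * Q 2 j)) := by
      have e : (X 1)^2 * (P 0 * P 2 * (P 1)^2) = (X 1 * P 1)^2 * (P 0 * P 2) := by ring
      rw [e, hcf 1, hPdP 0, hPdP 2]
      have e' : ((-1:ℝ)^j * f * (L 1)^j)^2 = ((-1:ℝ)^j)^2 * (f * (L 1)^j)^2 := by ring
      rw [e', hs2]
      ring
    have key2 : (X 0 * X 2) * (P 0 * P 2 * (P 1)^2)
        = (f^2 * ((L 1)^(2*j) * (L 0)^j * (L 2)^j))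
          * ((L 1)^2 * (Q 1 j)^2) := by
      have e : (X 0 * X 2) * (P 0 * P 2 * (P 1)^2) = ((X 0 * P 0) * (X 2 * P 2)) * (P 1)^2 := by
        ring
      rw [e, hcf 0, hcf 2, hPdP 1]
      have e' : ((-1:ℝ)^j * f * (L 0)^j) * ((-1:ℝ)^j * f * (L 2)^j)
          = ((-1:ℝ)^j)^2 * (f^2 * ((L 0)^j * (L 2)^j)) := by ring
      rw [e', hs2]
      ring
    rw [key1, key2] at hmul
    have hcpos : 0 < f^2 * ((L 1)^(2*j) * (L 0)^j * (L 2)^j) := by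
      have := hL 0; have := hL 1; have := hL 2
      positivity
    exact le_of_mul_le_mul_left hmul hcpos
  -- quantitative setup
  set es : ℝ := u 0 + u 2 - 2 * u 1 with hes
  set C0 : ℝ := u 0 * u 2 - (u 1)^2 with hC0
  have hcd1 : (0:ℝ) < c + d := by have h := hcd 1; push_cast at h; linarith
  have hcd2 : (0:ℝ) < c + 2*d := by have h := hcd 2; push_cast at h; linarith
  have heps : 0 < es := by
    have e : es = 2*(d^2 - a*c*d + b*c^2) / (c * ((c+d) * (c+2*d))) := by
      rw [hes, hudef]
      simp only [hLdef]
      push_cast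
      rw [div_add_div _ _ (by norm_num; linarith : (c + d*(0:ℝ)) ≠ 0)
        (by norm_num; nlinarith : (c + d*(2:ℝ)) ≠ 0)]
      field_simp
      ring
    rw [e]
    apply div_pos (by linarith)
    positivity
  set x : ℕ → ℝ := fun k => ((u 0 + (k:ℝ)) * (u 2 + (k:ℝ))) / ((u 1 + (k:ℝ))^2) with hxdef
  have hxpos : ∀ k, 0 < x k := by
    intro k
    have h0 := hupos 0; have h1 := hupos 1; have h2 := hupos 2
    rw [hxdef]
    positivity
  have hprodx : ∀ j : ℕ, (∏ k ∈ range (j+1), x k) = (Q 0 j * Q 2 j) / ((Q 1 j)^2) := by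
    intro j
    rw [hQdef]
    simp only [hxdef]
    rw [← Finset.prod_mul_distrib, ← Finset.prod_pow, ← Finset.prod_div_distrib]
  set M : ℝ := (L 1)^2 / (L 0 * L 2) with hM
  have hbound : ∀ j : ℕ, (∏ k ∈ range (j+1), x k) ≤ M := by
    intro j
    rw [hprodx j, hM, div_le_div_iff₀ (by have := hQpos 1 j; positivity)
      (mul_pos (hL 0) (hL 2))]
    calc (Q 0 j * Q 2 j) * (L 0 * L 2) = (L 0 * L 2) * (Q 0 j * Q 2 j) := by ring
      _ ≤ (L 1)^2 * (Q 1 j)^2 := hQineq j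
  set K : ℕ := ⌈max (u 1) (2*|C0|/es)⌉₊ + 1 with hK
  have hKprop : ∀ k : ℕ, K ≤ k → u 1 ≤ (k:ℝ) ∧ 2*|C0| ≤ es * (k:ℝ) := by
    intro k hk
    have h1 : (max (u 1) (2*|C0|/es)) ≤ (K:ℝ) := by
      calc (max (u 1) (2*|C0|/es)) ≤ (⌈max (u 1) (2*|C0|/es)⌉₊ : ℝ) := Nat.le_ceil _
        _ ≤ (K:ℝ) := by rw [hK]; push_cast; linarith
    have h2 : (K:ℝ) ≤ (k:ℝ) := by exact_mod_cast hk
    constructor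
    · exact le_trans (le_trans (le_max_left _ _) h1) h2
    · have h3 : 2*|C0|/es ≤ (k:ℝ) := le_trans (le_trans (le_max_right _ _) h1) h2
      rw [div_le_iff₀ heps] at h3
      linarith [h3]
  have hxk : ∀ k : ℕ, K ≤ k → es / (8*((k:ℝ)+1)) ≤ x k - 1 := by
    intro k hk
    obtain ⟨hku, hkC⟩ := hKprop k hk
    have hknn : (0:ℝ) ≤ (k:ℝ) := Nat.cast_nonneg k
    have h1pos := hupos 1
    have hx1 : x k - 1 = (es*(k:ℝ) + C0) / ((u 1 + (k:ℝ))^2) := by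
      rw [hxdef, hes, hC0]
      field_simp
      ring
    rw [hx1, div_le_div_iff₀ (by positivity) (by positivity)]
    have habs1 : -|C0| ≤ C0 := neg_abs_le C0
    nlinarith [mul_nonneg (sub_nonneg.mpr hku) (by positivity : (0:ℝ) ≤ 3*(k:ℝ) + u 1),
      mul_nonneg heps.le hknn, mul_nonneg (mul_nonneg heps.le hknn) hknn]
  -- harmonic divergence
  set H : ℕ → ℝ := fun n => ∑ i ∈ range n, (1:ℝ)/((i:ℝ)+1) with hH
  have hHtend : Filter.Tendsto H Filter.atTop Filter.atTop :=
    Real.tendsto_sum_range_one_div_nat_succ_atTop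
  set dl : ℝ := ∏ k ∈ range K, x k with hdl
  have hdlpos : 0 < dl := Finset.prod_pos (fun k _ => hxpos k)
  obtain ⟨N, hN⟩ := Filter.eventually_atTop.mp
    (Filter.tendsto_atTop.mp hHtend (H K + (8/es) * (M/dl + 1)))
  set j : ℕ := max N K with hj
  have hjK : K ≤ j + 1 := le_trans (le_max_right N K) (Nat.le_succ _)
  have hHj : H K + (8/es)*(M/dl + 1) ≤ H (j+1) :=
    hN (j+1) (le_trans (le_max_left N K) (Nat.le_succ _))
  have hsplit : (∏ k ∈ range (j+1), x k) = dl * ∏ k ∈ Ico K (j+1), x k := by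
    rw [hdl, Finset.range_eq_Ico,
      ← Finset.prod_Ico_consecutive x (Nat.zero_le K) hjK, Finset.range_eq_Ico]
  have hIcoLB : 1 + ∑ k ∈ Ico K (j+1), (x k - 1) ≤ ∏ k ∈ Ico K (j+1), x k := by
    have h := one_add_sum_le_prod (Ico K (j+1)) (fun k => x k - 1)
      (fun k hk => by
        have h1 := hxk k (Finset.mem_Ico.mp hk).1
        have h2 : 0 < es / (8*((k:ℝ)+1)) := by positivity
        show (0:ℝ) ≤ x k - 1
        linarith)
    calc 1 + ∑ k ∈ Ico K (j+1), (x k - 1) ≤ ∏ k ∈ Ico K (j+1), (1 + (x k - 1)) := h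
      _ = ∏ k ∈ Ico K (j+1), x k := by
        apply Finset.prod_congr rfl; intro k _; ring
  have hsumLB : (es/8) * (H (j+1) - H K) ≤ ∑ k ∈ Ico K (j+1), (x k - 1) := by
    have h1 : ∑ k ∈ Ico K (j+1), es/(8*((k:ℝ)+1)) ≤ ∑ k ∈ Ico K (j+1), (x k - 1) :=
      Finset.sum_le_sum (fun k hk => hxk k (Finset.mem_Ico.mp hk).1)
    have h2 : ∑ k ∈ Ico K (j+1), es/(8*((k:ℝ)+1))
        = (es/8) * ∑ k ∈ Ico K (j+1), (1:ℝ)/((k:ℝ)+1) := by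
      rw [Finset.mul_sum]
      apply Finset.sum_congr rfl; intro k _
      field_simp
    have h3 : ∑ k ∈ Ico K (j+1), (1:ℝ)/((k:ℝ)+1) = H (j+1) - H K := by
      rw [hH]
      exact Finset.sum_Ico_eq_sub _ hjK
    rw [h2, h3] at h1
    exact h1
  have hfinal : M + 2*dl ≤ M := by
    have hc0 : es/8 * (8/es) = 1 := by
      rw [div_mul_div_comm, mul_comm]
      exact div_self (by positivity)
    have hc1 : (es/8) * ((8/es) * (M/dl + 1)) = M/dl + 1 := by
      rw [← mul_assoc, hc0, one_mul]
    have hc2 : dl * (M/dl) = M := by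
      rw [mul_comm]
      exact div_mul_cancel₀ M (ne_of_gt hdlpos)
    have hchain : dl * (1 + (M/dl + 1)) ≤ ∏ k ∈ range (j+1), x k := by
      rw [hsplit]
      apply mul_le_mul_of_nonneg_left _ hdlpos.le
      calc 1 + (M/dl + 1) = 1 + (es/8) * ((8/es) * (M/dl + 1)) := by rw [hc1]
        _ ≤ 1 + (es/8) * (H (j+1) - H K) := by
            have h4 : (8/es) * (M/dl + 1) ≤ H (j+1) - H K := by linarith
            have h5 : 0 < es/8 := by positivity
            nlinarith [h4, h5]
        _ ≤ 1 + ∑ k ∈ Ico K (j+1), (x k - 1) := by linarith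
        _ ≤ ∏ k ∈ Ico K (j+1), x k := hIcoLB
    have h6 := hbound j
    have h7 : dl * (1 + (M/dl + 1)) = M + 2*dl := by
      rw [mul_add, mul_add, hc2]; ring
    linarith
  linarith


theorem stmt_18 (a b c d : ℝ) (hc : 0 < c) (hd : 0 < d) (hb : 0 < b)
    (hcd : ∀ m : ℕ, 0 < c + d * (m : ℝ))
    (hjcm : JointlyCompletelyMonotone (fun m n =>
      1 / (1 + a * (m : ℝ) + b * (m : ℝ) ^ 2 + (c + d * (m : ℝ)) * (n : ℝ)))) :
    ∃ r₁ r₂ : ℝ, r₂ ≤ r₁ ∧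
      (∀ x : ℝ, 1 + a * x + b * x ^ 2 = b * (x + r₂) * (x + r₁)) ∧
      r₂ ≤ c / d ∧ c / d ≤ r₁ := by
  have hkey := key_ineq a b c d hc hd hb hcd hjcm
  have ha : 0 < a := by
    nlinarith [mul_pos (mul_pos hb hc) hc, pow_pos hd 2, mul_pos hc hd]
  have hdisc : 0 ≤ a^2 - 4*b := by
    have hX : b*c^2 + d^2 ≤ a*c*d := by nlinarith [hkey]
    have hXpos : (0:ℝ) < b*c^2 + d^2 := by positivity
    have hprod : 0 ≤ (a*c*d - (b*c^2+d^2)) * (a*c*d + (b*c^2+d^2)) :=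
      mul_nonneg (by linarith) (by linarith)
    nlinarith [hprod, sq_nonneg (b*c^2 - d^2), mul_pos (mul_pos hc hc) (mul_pos hd hd)]
  set s : ℝ := Real.sqrt (a^2 - 4*b) with hs
  have hs2 : s^2 = a^2 - 4*b := Real.sq_sqrt hdisc
  have hsnn : 0 ≤ s := Real.sqrt_nonneg _
  have hb2 : (0:ℝ) < 2*b := by linarith
  refine ⟨(a + s)/(2*b), (a - s)/(2*b), ?_, ?_, ?_, ?_⟩
  · apply (div_le_div_iff_of_pos_right hb2).mpr
    linarith
  · intro x
    have h4b : (4:ℝ)*b ≠ 0 := ne_of_gt (by linarith)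
    have expand : b*(x + (a-s)/(2*b))*(x + (a+s)/(2*b))
        = b*x^2 + a*x + (a^2 - s^2)/(4*b) := by
      field_simp
      ring
    rw [expand, hs2, show a^2 - (a^2 - 4*b) = 4*b from by ring, div_self h4b]
    ring
  · rw [div_le_div_iff₀ hb2 hd]
    have hsd : 0 ≤ s * d := mul_nonneg hsnn hd.le
    rcases le_or_gt (a*d - 2*b*c) 0 with hcase | hcase
    · linarith
    · have hsq : (a*d - 2*b*c)^2 ≤ (s*d)^2 := by
        rw [mul_pow, hs2]
        nlinarith [hkey, hb]
      have := (pow_le_pow_iff_left₀ hcase.le hsd two_ne_zero).mp hsq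
      linarith
  · rw [div_le_div_iff₀ hd hb2]
    have hsd : 0 ≤ s * d := mul_nonneg hsnn hd.le
    rcases le_or_gt (2*b*c - a*d) 0 with hcase | hcase
    · linarith
    · have hsq : (2*b*c - a*d)^2 ≤ (s*d)^2 := by
        rw [mul_pow, hs2]
        nlinarith [hkey, hb]
      have := (pow_le_pow_iff_left₀ hcase.le hsd two_ne_zero).mp hsq
      linarith
end
end
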